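/- Let α : X → [1, ∞] and suppose: (i) there exist σ > 0 and C > 1 with α(h_q x) ≤ C(1 + |q|)^σ α(x) for all q ∈ ℝ, x ∈ X; (ii) there exist ā ∈ (0,1), b̄ > 0 and t₀ > 0 such that ∫_{-1}^{1} α(g_t h_s x) ds ≤ ā α(x) + b̄ for all t > t₀ and x ∈ X. Then for every a ∈ (0,1) there exist b > 0 and t₀' > 0 such that for all t > t₀' and x ∈ X, ∫_ℝ α(g_t h_s x) e^{-s²} ds ≤ a α(x) + b, provided ā can be chosen arbitrarily small (i.e. (ii) holds for every ā ∈ (0,1) with b̄ independent of ā). -/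

import Mathlib

/-!
Cover `ℝ` by the intervals `[2n - 1, 2n + 1]`, `n ∈ ℤ`. On the `n`-th one the Gaussian is at most
`exp (1 - (2n)² / 2)`, and the translation identity `h_{u + 2n} = h_u ∘ h_{2n}` turns the integral
of `α (g_t h_s x)` over it into the `[-1, 1]` integral at the point `h_{2n} x`. The interval estimate
and the polynomial bound, weakened to `(1 + |q|)^σ ≤ exp (σ |q|)`, bound that by
`exp (σ |2n|) (ā C α x + b̄)`. The resulting series converges to a constant `K` depending only on
`σ`, so `ā = a / (K C + 1)` gives the contraction factor `a`.
-/

open scoped ENNReal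
open MeasureTheory Set Real

lemma one_add_rpow_le_exp {x σ : ℝ} (hx : -1 ≤ x) (hσ : 0 ≤ σ) : (1 + x) ^ σ ≤ exp (σ * x) := by
  rw [mul_comm, exp_mul]
  exact rpow_le_rpow (by linarith) (by linarith [add_one_le_exp x]) hσ

lemma neg_sq_add_le {u : ℝ} (hu : |u| ≤ 1) (c : ℝ) : -(u + c) ^ 2 ≤ 1 - c ^ 2 / 2 := by
  have hu2 : u ^ 2 ≤ 1 := by nlinarith [sq_abs u, abs_nonneg u]
  nlinarith [sq_nonneg (2 * u + c)]

lemma setLIntegral_Icc_comp_add_right (F : ℝ → ℝ≥0∞) (a b c : ℝ) :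
    ∫⁻ u in Icc a b, F (u + c) = ∫⁻ s in Icc (a + c) (b + c), F s := by
  simpa [preimage_add_const_Icc] using
    (measurePreserving_add_right volume c).setLIntegral_comp_preimage_emb
      (measurableEmbedding_addRight c) F (Icc (a + c) (b + c))

lemma lintegral_le_tsum_setLIntegral_Icc_add_two_mul (F : ℝ → ℝ≥0∞) :
    ∫⁻ s, F s ≤ ∑' n : ℤ, ∫⁻ u in Icc (-1 : ℝ) 1, F (u + 2 * n) := by
  have hcover : (univ : Set ℝ) ⊆ ⋃ n : ℤ, Icc (-1 + 2 * (n : ℝ)) (1 + 2 * n) := by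
    intro s _
    refine mem_iUnion.2 ⟨⌊(s + 1) / 2⌋, ?_⟩
    have h₁ := Int.floor_le ((s + 1) / 2)
    have h₂ := Int.lt_floor_add_one ((s + 1) / 2)
    constructor <;> linarith
  calc ∫⁻ s, F s = ∫⁻ s in univ, F s := (setLIntegral_univ F).symm
    _ ≤ ∫⁻ s in ⋃ n : ℤ, Icc (-1 + 2 * (n : ℝ)) (1 + 2 * n), F s := lintegral_mono_set hcover
    _ ≤ ∑' n : ℤ, ∫⁻ s in Icc (-1 + 2 * (n : ℝ)) (1 + 2 * n), F s := lintegral_iUnion_le _ _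
    _ = ∑' n : ℤ, ∫⁻ u in Icc (-1 : ℝ) 1, F (u + 2 * n) := by
      simp_rw [setLIntegral_Icc_comp_add_right]

/-- On `[c - 1, c + 1]` the Gaussian is at most `exp (1 - c² / 2)`, and `exp (σ |c|)` dominates
`(1 + |c|) ^ σ`; here `c = 2n`. -/
noncomputable def gaussianShiftSum (σ : ℝ) : ℝ :=
  ∑' n : ℤ, exp (1 - (2 * n) ^ 2 / 2 + σ * |2 * (n : ℝ)|)

lemma summable_gaussianShiftSum (σ : ℝ) :
    Summable fun n : ℤ ↦ exp (1 - (2 * n) ^ 2 / 2 + σ * |2 * (n : ℝ)|) := by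
  have h := (summable_pow_mul_jacobiTheta₂_term_bound (σ / π) (T := 2 / π)
    (by positivity) 0).mul_left (exp 1)
  refine h.congr fun n ↦ ?_
  rw [pow_zero, one_mul, ← exp_add, abs_mul, abs_two, Int.cast_abs]
  congr 1
  field_simp
  ring

lemma gaussianShiftSum_pos (σ : ℝ) : 0 < gaussianShiftSum σ :=
  (summable_gaussianShiftSum σ).tsum_pos (fun _ ↦ (exp_pos _).le) 0 (exp_pos _)

theorem lintegral_mul_exp_neg_sq_le {A : ℝ → ℝ≥0∞} {σ : ℝ} {M : ℝ≥0∞}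
    (hA : ∀ c, ∫⁻ u in Icc (-1 : ℝ) 1, A (u + c) ≤ ENNReal.ofReal (exp (σ * |c|)) * M) :
    ∫⁻ s, A s * ENNReal.ofReal (exp (-s ^ 2)) ≤ ENNReal.ofReal (gaussianShiftSum σ) * M := by
  have hpiece : ∀ c : ℝ, ∫⁻ u in Icc (-1 : ℝ) 1, A (u + c) * ENNReal.ofReal (exp (-(u + c) ^ 2))
      ≤ ENNReal.ofReal (exp (1 - c ^ 2 / 2 + σ * |c|)) * M := fun c ↦ calc
    _ ≤ ∫⁻ u in Icc (-1 : ℝ) 1, ENNReal.ofReal (exp (1 - c ^ 2 / 2)) * A (u + c) := by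
      refine setLIntegral_mono' measurableSet_Icc fun u hu ↦ ?_
      rw [mul_comm]
      gcongr
      exact neg_sq_add_le (abs_le.2 hu) c
    _ = ENNReal.ofReal (exp (1 - c ^ 2 / 2)) * ∫⁻ u in Icc (-1 : ℝ) 1, A (u + c) :=
      lintegral_const_mul' _ _ ENNReal.ofReal_ne_top
    _ ≤ ENNReal.ofReal (exp (1 - c ^ 2 / 2)) * (ENNReal.ofReal (exp (σ * |c|)) * M) := by
      gcongr
      exact hA c
    _ = ENNReal.ofReal (exp (1 - c ^ 2 / 2 + σ * |c|)) * M := by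
      rw [← mul_assoc, ← ENNReal.ofReal_mul (exp_pos _).le, ← exp_add]
  calc ∫⁻ s, A s * ENNReal.ofReal (exp (-s ^ 2))
      ≤ ∑' n : ℤ, ∫⁻ u in Icc (-1 : ℝ) 1,
          A (u + 2 * n) * ENNReal.ofReal (exp (-(u + 2 * n) ^ 2)) :=
        lintegral_le_tsum_setLIntegral_Icc_add_two_mul _
    _ ≤ ∑' n : ℤ, ENNReal.ofReal (exp (1 - (2 * n) ^ 2 / 2 + σ * |2 * (n : ℝ)|)) * M :=
        ENNReal.tsum_le_tsum fun n ↦ hpiece _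
    _ = ENNReal.ofReal (gaussianShiftSum σ) * M := by
      rw [ENNReal.tsum_mul_right, gaussianShiftSum,
        ENNReal.ofReal_tsum_of_nonneg (fun _ ↦ (exp_pos _).le) (summable_gaussianShiftSum σ)]

lemma setLIntegral_Icc_comp_shift_le {X : Type*} {f : X → X} {h : ℝ → X → X} {α : X → ℝ≥0∞}
    {σ C a b : ℝ} (hadd : ∀ s s' : ℝ, ∀ x : X, h s (h s' x) = h (s + s') x)
    (hσ : 0 ≤ σ) (hC : 0 ≤ C) (ha : 0 ≤ a)
    (hpoly : ∀ q : ℝ, ∀ x : X, α (h q x) ≤ ENNReal.ofReal (C * (1 + |q|) ^ σ) * α x)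
    (hint : ∀ x : X, ∫⁻ s in Icc (-1 : ℝ) 1, α (f (h s x)) ≤ ENNReal.ofReal a * α x + ENNReal.ofReal b)
    (x : X) (c : ℝ) :
    ∫⁻ u in Icc (-1 : ℝ) 1, α (f (h (u + c) x)) ≤
      ENNReal.ofReal (exp (σ * |c|)) * (ENNReal.ofReal (a * C) * α x + ENNReal.ofReal b) := calc
  _ = ∫⁻ u in Icc (-1 : ℝ) 1, α (f (h u (h c x))) := by simp only [hadd]
  _ ≤ ENNReal.ofReal a * (ENNReal.ofReal (C * (1 + |c|) ^ σ) * α x) + ENNReal.ofReal b := by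
    grw [hint (h c x), hpoly c x]
  _ ≤ ENNReal.ofReal (exp (σ * |c|) * (a * C)) * α x
        + ENNReal.ofReal (exp (σ * |c|)) * ENNReal.ofReal b := by
    rw [← mul_assoc, ← ENNReal.ofReal_mul ha]
    gcongr ENNReal.ofReal ?_ * _ + ?_
    · have hpow := one_add_rpow_le_exp (by linarith [abs_nonneg c]) hσ (x := |c|)
      have haC : 0 ≤ a * C := mul_nonneg ha hC
      nlinarith
    · exact le_mul_of_one_le_left' (ENNReal.one_le_ofReal.2 (one_le_exp (by positivity)))
  _ = _ := by rw [ENNReal.ofReal_mul (exp_pos _).le, mul_assoc, mul_add]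

theorem gaussian_integral_estimate_from_interval_general {X : Type*} (g h : ℝ → X → X)
    (α : X → ℝ≥0∞)
    (hadd : ∀ s s' : ℝ, ∀ x : X, h s (h s' x) = h (s + s') x)
    (hpoly : ∃ σ > (0 : ℝ), ∃ C > (1 : ℝ), ∀ q : ℝ, ∀ x : X,
      α (h q x) ≤ ENNReal.ofReal (C * (1 + |q|) ^ σ) * α x)
    (hhoro : ∃ bbar > (0 : ℝ), ∀ abar ∈ Set.Ioo (0 : ℝ) 1, ∃ t₀ > (0 : ℝ),
      ∀ t > t₀, ∀ x : X,
        (∫⁻ s in Set.Icc (-1 : ℝ) 1, α (g t (h s x))) ≤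
          ENNReal.ofReal abar * α x + ENNReal.ofReal bbar) :
    ∀ a ∈ Set.Ioo (0 : ℝ) 1, ∃ b > (0 : ℝ), ∃ t₀' > (0 : ℝ), ∀ t > t₀', ∀ x : X,
      (∫⁻ s : ℝ, α (g t (h s x)) * ENNReal.ofReal (Real.exp (-s ^ 2))) ≤
        ENNReal.ofReal a * α x + ENNReal.ofReal b := by
  obtain ⟨σ, hσ, C, hC, hpoly⟩ := hpoly
  obtain ⟨bbar, hbbar, hhoro⟩ := hhoro
  rintro a ⟨ha₀, ha₁⟩
  set K := gaussianShiftSum σ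
  have hK : 0 < K := gaussianShiftSum_pos σ
  set abar := a / (K * C + 1)
  have habar : abar ∈ Ioo (0 : ℝ) 1 :=
    ⟨by positivity, (div_lt_one (by positivity)).2 (by nlinarith)⟩
  obtain ⟨t₀, ht₀, hint⟩ := hhoro abar habar
  refine ⟨K * bbar, mul_pos hK hbbar, t₀, ht₀, fun t ht x ↦ ?_⟩
  have hlocal := setLIntegral_Icc_comp_shift_le hadd hσ.le (by linarith) habar.1.le hpoly
    (hint t ht) x
  calc _ ≤ ENNReal.ofReal K * (ENNReal.ofReal (abar * C) * α x + ENNReal.ofReal bbar) :=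
        lintegral_mul_exp_neg_sq_le hlocal
    _ ≤ ENNReal.ofReal a * α x + ENNReal.ofReal (K * bbar) := by
      rw [mul_add, ← mul_assoc, ← ENNReal.ofReal_mul hK.le, ← ENNReal.ofReal_mul hK.le]
      gcongr ENNReal.ofReal ?_ * _ + _
      calc K * (abar * C) = a * (K * C / (K * C + 1)) := by ring
        _ ≤ a := mul_le_of_le_one_right ha₀.le ((div_le_one (by positivity)).2 (by linarith))

/-- from a polynomial bound on `α ∘ h_q` and integral estimates over `[-1,1]`
    (with arbitrarily small contraction factor `ā` and uniform `b̄`), deduce Gaussian-weighted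
    integral estimates over all of ℝ with any contraction factor `a ∈ (0,1)`. -/
theorem gaussian_integral_estimate_from_interval {X : Type*} (g h : ℝ → X → X)
    (α : X → ℝ≥0∞) (hα1 : ∀ x, 1 ≤ α x)
    (hadd : ∀ s s' : ℝ, ∀ x : X, h s (h s' x) = h (s + s') x)
    (hpoly : ∃ σ > (0 : ℝ), ∃ C > (1 : ℝ), ∀ q : ℝ, ∀ x : X,
      α (h q x) ≤ ENNReal.ofReal (C * (1 + |q|) ^ σ) * α x)
    (hhoro : ∃ bbar > (0 : ℝ), ∀ abar ∈ Set.Ioo (0 : ℝ) 1, ∃ t₀ > (0 : ℝ),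
      ∀ t > t₀, ∀ x : X,
        (∫⁻ s in Set.Icc (-1 : ℝ) 1, α (g t (h s x))) ≤
          ENNReal.ofReal abar * α x + ENNReal.ofReal bbar) :
    ∀ a ∈ Set.Ioo (0 : ℝ) 1, ∃ b > (0 : ℝ), ∃ t₀' > (0 : ℝ), ∀ t > t₀', ∀ x : X,
      (∫⁻ s : ℝ, α (g t (h s x)) * ENNReal.ofReal (Real.exp (-s ^ 2))) ≤
        ENNReal.ofReal a * α x + ENNReal.ofReal b :=
  gaussian_integral_estimate_from_interval_general g h α hadd hpoly hhoro
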